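/- arXiv:1810.03051 — 2 statements merged into one kernel-verified Lean document; each statement's English description precedes it below -/
import Mathlib

section
/- The subspace error satisfies a triangle-type inequality: for basis matrices P₁, P₂, P₃ of the same dimension, sin θ_max(P₁, P₃) ≤ sin θ_max(P₁, P₂) + sin θ_max(P₂, P₃), where sin θ_max(P,Q) := ‖(I − PPᵀ)Q‖. -/
open Matrix BigOperators MeasureTheory

/-- Spectral (operator 2-) norm of a real matrix. -/
noncomputable def specNorm {m n : Type*} [Fintype m] [Fintype n] [DecidableEq n]
    (A : Matrix m n ℝ) : ℝ :=
  ‖LinearMap.toContinuousLinearMap (Matrix.toEuclideanLin A)‖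

/-- Euclidean norm of a vector. -/
noncomputable def vecNorm {n : Type*} [Fintype n] (v : n → ℝ) : ℝ :=
  Real.sqrt (∑ i, v i ^ 2)

/-- The selection matrix I_T whose columns are the standard basis vectors indexed by T. -/
def selMat {n : ℕ} (T : Finset (Fin n)) : Matrix (Fin n) {i // i ∈ T} ℝ :=
  fun i j => if i = (j : Fin n) then 1 else 0

open scoped Matrix.Norms.L2Operator

lemma specNorm_eq_norm {m n : Type*} [Fintype m] [Fintype n] [DecidableEq n]
    (A : Matrix m n ℝ) : specNorm A = ‖A‖ := rfl

lemma conjT_eq_T {m n : Type*} (A : Matrix m n ℝ) : Aᴴ = Aᵀ := by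
  ext i j; simp [Matrix.conjTranspose_apply]

lemma norm_one_le {r : ℕ} : ‖(1 : Matrix (Fin r) (Fin r) ℝ)‖ ≤ 1 := by
  rw [Matrix.cstar_norm_def, _root_.map_one]
  exact le_of_eq_of_le (congrArg norm (ContinuousLinearMap.one_def)) ContinuousLinearMap.norm_id_le

lemma norm_le_one_of_orth {n r : ℕ} (P : Matrix (Fin n) (Fin r) ℝ) (h : Pᵀ * P = 1) :
    ‖P‖ ≤ 1 := by
  have h1 : ‖P‖ * ‖P‖ = ‖Pᴴ * P‖ := (Matrix.l2_opNorm_conjTranspose_mul_self P).symm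
  rw [conjT_eq_T, h] at h1
  have h2 := norm_one_le (r := r)
  nlinarith [norm_nonneg P]

lemma norm_proj_le_one {n r : ℕ} (P : Matrix (Fin n) (Fin r) ℝ) (h : Pᵀ * P = 1) :
    ‖(1 - P * Pᵀ : Matrix (Fin n) (Fin n) ℝ)‖ ≤ 1 := by
  set Q : Matrix (Fin n) (Fin n) ℝ := 1 - P * Pᵀ with hQ
  have hsym : Qᴴ = Q := by
    rw [conjT_eq_T, hQ, Matrix.transpose_sub, Matrix.transpose_one, Matrix.transpose_mul,
      Matrix.transpose_transpose]
  have hidem : Q * Q = Q := by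
    rw [hQ]
    simp only [Matrix.mul_sub, Matrix.sub_mul, Matrix.one_mul, Matrix.mul_one]
    rw [Matrix.mul_assoc, ← Matrix.mul_assoc Pᵀ P Pᵀ, h, Matrix.one_mul]
    abel
  have h1 : ‖Q‖ * ‖Q‖ = ‖Q‖ := by
    conv_rhs => rw [← hidem]
    rw [← Matrix.l2_opNorm_conjTranspose_mul_self Q, hsym]
  nlinarith [norm_nonneg Q]

/-- Triangle-type inequality for the subspace error. -/
theorem sin_theta_max_triangle {n r : ℕ} (P₁ P₂ P₃ : Matrix (Fin n) (Fin r) ℝ)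
    (h1 : P₁ᵀ * P₁ = 1) (h2 : P₂ᵀ * P₂ = 1) (h3 : P₃ᵀ * P₃ = 1) :
    specNorm ((1 - P₁ * P₁ᵀ) * P₃) ≤
      specNorm ((1 - P₁ * P₁ᵀ) * P₂) + specNorm ((1 - P₂ * P₂ᵀ) * P₃) := by
  simp only [specNorm_eq_norm]
  set Q : Matrix (Fin n) (Fin n) ℝ := 1 - P₁ * P₁ᵀ with hQ
  have key : Q * P₃ = (Q * P₂) * (P₂ᵀ * P₃) + Q * ((1 - P₂ * P₂ᵀ) * P₃) := by
    simp only [Matrix.mul_sub, Matrix.sub_mul, Matrix.one_mul, Matrix.mul_assoc]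
    abel
  calc ‖Q * P₃‖ = ‖(Q * P₂) * (P₂ᵀ * P₃) + Q * ((1 - P₂ * P₂ᵀ) * P₃)‖ := by rw [← key]
    _ ≤ ‖(Q * P₂) * (P₂ᵀ * P₃)‖ + ‖Q * ((1 - P₂ * P₂ᵀ) * P₃)‖ := norm_add_le _ _
    _ ≤ ‖Q * P₂‖ * ‖P₂ᵀ * P₃‖ + ‖Q‖ * ‖(1 - P₂ * P₂ᵀ) * P₃‖ :=
        add_le_add (Matrix.l2_opNorm_mul _ _) (Matrix.l2_opNorm_mul _ _)
    _ ≤ ‖Q * P₂‖ * 1 + 1 * ‖(1 - P₂ * P₂ᵀ) * P₃‖ := by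
        have hA : ‖P₂ᵀ * P₃‖ ≤ 1 := by
          calc ‖P₂ᵀ * P₃‖ ≤ ‖P₂ᵀ‖ * ‖P₃‖ := Matrix.l2_opNorm_mul _ _
            _ ≤ 1 * 1 := by
                apply mul_le_mul _ (norm_le_one_of_orth P₃ h3) (norm_nonneg _) zero_le_one
                rw [← conjT_eq_T, Matrix.l2_opNorm_conjTranspose]
                exact norm_le_one_of_orth P₂ h2
            _ = 1 := by ring
        have hB : ‖Q‖ ≤ 1 := norm_proj_le_one P₁ h1
        exact add_le_add (mul_le_mul_of_nonneg_left hA (norm_nonneg _))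
          (mul_le_mul_of_nonneg_right hB (norm_nonneg _))
    _ = ‖Q * P₂‖ + ‖(1 - P₂ * P₂ᵀ) * P₃‖ := by ring
end

section
/- In the projected least squares step: suppose y = ℓ − I_T I_Tᵀ ℓ for a vector ℓ ∈ ℝⁿ and support set T, let Ψ := I − P̂P̂ᵀ for a basis matrix P̂ with ‖I_Tᵀ P̂‖ < 1, and define ẑ := (Ψ_TᵀΨ_T)^{-1} Ψ_Tᵀ Ψ y and ℓ̂ := y − I_T ẑ. Then the error satisfies ℓ̂ − ℓ = −I_T (Ψ_TᵀΨ_T)^{-1} I_Tᵀ Ψ ℓ. -/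
open Matrix BigOperators MeasureTheory

set_option maxHeartbeats 1000000 in
lemma isUnit_one_sub_mul_transpose {m k : Type*} [Fintype m] [Fintype k]
    [DecidableEq m] [DecidableEq k] (B : Matrix m k ℝ)
    (h : ‖LinearMap.toContinuousLinearMap (Matrix.toEuclideanLin B)‖ < 1) :
    IsUnit (1 - B * Bᵀ) := by
  suffices h2 : IsUnit (Matrix.toEuclideanCLM (𝕜 := ℝ) (1 - B * Bᵀ)) by
    have := h2.map (Matrix.toEuclideanCLM (𝕜 := ℝ)).symm
    simpa using this
  set f := LinearMap.toContinuousLinearMap (Matrix.toEuclideanLin B) with hf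
  have hBt : (Matrix.toEuclideanCLM (𝕜 := ℝ) (1 - B * Bᵀ)) =
      1 - f ∘L ContinuousLinearMap.adjoint f := by
    apply ContinuousLinearMap.coe_injective
    push_cast [Matrix.coe_toEuclideanCLM_eq_toEuclideanLin]
    rw [map_sub]
    congr 1
    · rw [Matrix.toEuclideanLin_eq_toLin, Matrix.toLin_one]; rfl
    · rw [show (Bᵀ : Matrix k m ℝ) = Bᴴ from
        (Matrix.conjTranspose_eq_transpose_of_trivial B).symm]
      rw [show Matrix.toEuclideanLin (B * Bᴴ) =
          (Matrix.toEuclideanLin B).comp (Matrix.toEuclideanLin Bᴴ) by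
        simp only [Matrix.toEuclideanLin_eq_toLin]
        exact Matrix.toLin_mul (PiLp.basisFun 2 ℝ m) (PiLp.basisFun 2 ℝ k)
          (PiLp.basisFun 2 ℝ m) B Bᴴ]
      rw [Matrix.toEuclideanLin_conjTranspose_eq_adjoint, LinearMap.adjoint_eq_toCLM_adjoint]
      rfl
  rw [hBt]
  have hnorm : ‖f ∘L ContinuousLinearMap.adjoint f‖ < 1 := by
    calc ‖f ∘L ContinuousLinearMap.adjoint f‖ ≤ ‖f‖ * ‖ContinuousLinearMap.adjoint f‖ :=
          ContinuousLinearMap.opNorm_comp_le _ _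
      _ = ‖f‖ * ‖f‖ := by rw [ContinuousLinearMap.adjoint.norm_map f]
      _ < 1 := by nlinarith [norm_nonneg f]
  exact ⟨Units.oneSub _ hnorm, rfl⟩

/-- Error expression for the projected least squares step. -/
theorem projected_LS_error {n r : ℕ} (ℓ : Fin n → ℝ) (T : Finset (Fin n))
    (Ph : Matrix (Fin n) (Fin r) ℝ) (hPh : Phᵀ * Ph = 1)
    (hden : specNorm ((selMat T)ᵀ * Ph) < 1) :
    let Ψ : Matrix (Fin n) (Fin n) ℝ := 1 - Ph * Phᵀ
    let ΨT := Ψ * selMat T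
    let y := ℓ - (selMat T * (selMat T)ᵀ) *ᵥ ℓ
    let zhat := (ΨTᵀ * ΨT)⁻¹ *ᵥ (ΨTᵀ *ᵥ (Ψ *ᵥ y))
    let ℓhat := y - selMat T *ᵥ zhat
    ℓhat - ℓ = -((selMat T * (ΨTᵀ * ΨT)⁻¹ * (selMat T)ᵀ * Ψ) *ᵥ ℓ) := by
  intro Ψ ΨT y zhat ℓhat
  set S := selMat T with hS
  -- basic matrix facts
  have hSS : Sᵀ * S = 1 := by
    ext j k
    simp only [Matrix.mul_apply, Matrix.transpose_apply, hS, selMat, Matrix.one_apply]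
    rw [Finset.sum_eq_single (j : Fin n)]
    · by_cases h : (j : Fin n) = k <;> simp [h, Subtype.ext_iff]
    · intro b _ hb; simp [hb]
    · simp
  have hΨs : Ψᵀ = Ψ := by
    simp [Ψ, Matrix.transpose_sub, Matrix.transpose_mul, Matrix.transpose_one,
      Matrix.transpose_transpose]
  have hQQ : (Ph * Phᵀ) * (Ph * Phᵀ) = Ph * Phᵀ := by
    rw [Matrix.mul_assoc, ← Matrix.mul_assoc Phᵀ, hPh, Matrix.one_mul]
  have hΨΨ : Ψ * Ψ = Ψ := by
    simp [Ψ, Matrix.sub_mul, Matrix.mul_sub, hQQ]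
  have hΨTt : ΨTᵀ = Sᵀ * Ψ := by rw [show ΨT = Ψ * S from rfl, Matrix.transpose_mul, hΨs]
  have hM : ΨTᵀ * ΨT = Sᵀ * Ψ * S := by
    rw [hΨTt, show ΨT = Ψ * S from rfl, ← Matrix.mul_assoc, Matrix.mul_assoc Sᵀ Ψ Ψ, hΨΨ]
  have hM2 : Sᵀ * Ψ * S = 1 - (Sᵀ * Ph) * (Sᵀ * Ph)ᵀ := by
    rw [Matrix.transpose_mul, Matrix.transpose_transpose]
    rw [show Ψ = 1 - Ph * Phᵀ from rfl]
    rw [Matrix.mul_sub, Matrix.mul_one, Matrix.sub_mul, hSS]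
    rw [Matrix.mul_assoc, Matrix.mul_assoc, Matrix.mul_assoc]
  have hUnit : IsUnit (ΨTᵀ * ΨT) := by
    rw [hM, hM2]
    exact isUnit_one_sub_mul_transpose _ hden
  have hinv : (ΨTᵀ * ΨT)⁻¹ * (ΨTᵀ * ΨT) = 1 :=
    Matrix.nonsing_inv_mul _ ((Matrix.isUnit_iff_isUnit_det _).mp hUnit)
  set M := ΨTᵀ * ΨT with hMdef
  -- rewrite vectors as matrices applied to ℓ
  have hy : y = (1 - S * Sᵀ) *ᵥ ℓ := by
    rw [Matrix.sub_mulVec, Matrix.one_mulVec]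
  have hz : zhat = (M⁻¹ * ((Sᵀ * Ψ) * (1 - S * Sᵀ))) *ᵥ ℓ := by
    show M⁻¹ *ᵥ (ΨTᵀ *ᵥ (Ψ *ᵥ y)) = _
    rw [hy, Matrix.mulVec_mulVec, Matrix.mulVec_mulVec, Matrix.mulVec_mulVec, hΨTt,
      Matrix.mul_assoc M⁻¹ (Sᵀ * Ψ) Ψ, Matrix.mul_assoc Sᵀ Ψ Ψ, hΨΨ,
      Matrix.mul_assoc M⁻¹ (Sᵀ * Ψ) (1 - S * Sᵀ)]
  have key : (1 - S * Sᵀ) - S * (M⁻¹ * ((Sᵀ * Ψ) * (1 - S * Sᵀ))) - 1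
      = -(S * M⁻¹ * Sᵀ * Ψ) := by
    have h1 : (Sᵀ * Ψ) * (1 - S * Sᵀ) = Sᵀ * Ψ - M * Sᵀ := by
      rw [Matrix.mul_sub, Matrix.mul_one, hM, Matrix.mul_assoc (Sᵀ * Ψ) S Sᵀ]
    rw [h1, Matrix.mul_sub, ← Matrix.mul_assoc M⁻¹ M Sᵀ, hinv, Matrix.one_mul,
      Matrix.mul_sub]
    have h2 : S * (M⁻¹ * (Sᵀ * Ψ)) = S * M⁻¹ * Sᵀ * Ψ := by
      simp [Matrix.mul_assoc]
    rw [h2]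
    abel
  calc ℓhat - ℓ = ((1 - S * Sᵀ) - S * (M⁻¹ * ((Sᵀ * Ψ) * (1 - S * Sᵀ))) - 1) *ᵥ ℓ := by
        show y - S *ᵥ zhat - ℓ = _
        rw [hy, hz, Matrix.mulVec_mulVec]
        simp only [Matrix.sub_mulVec, Matrix.one_mulVec]
    _ = -((S * M⁻¹ * Sᵀ * Ψ) *ᵥ ℓ) := by rw [key, Matrix.neg_mulVec]
end
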